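/- A topological space X is s-closed if and only if every cover of X by semi-regular sets has a finite subcover; X is S-closed if and only if every cover of X by regular closed sets has a finite subcover; and X is nearly compact if and only if every cover of X by regular open sets has a finite subcover. -/
import Mathlib


open Set

section Defs
variable {X : Type*} [TopologicalSpace X]

/-- A set is semi-open if it is contained in the closure of its interior. -/
def SemiOpen (A : Set X) : Prop := A ⊆ closure (interior A)

/-- A set is semi-closed if the interior of its closure is contained in it. -/
def SemiClosed (A : Set X) : Prop := interior (closure A) ⊆ A

/-- A set is semi-regular if it is both semi-open and semi-closed. -/
def SemiRegular (A : Set X) : Prop := SemiOpen A ∧ SemiClosed A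

/-- A set is β-open if it is contained in the closure of the interior of its closure. -/
def BetaOpen (A : Set X) : Prop := A ⊆ closure (interior (closure A))

/-- A set is regular open if it equals the interior of its closure. -/
def RegularOpen (A : Set X) : Prop := A = interior (closure A)

/-- A set is regular closed if it equals the closure of its interior. -/
def RegularClosed (A : Set X) : Prop := A = closure (interior A)

/-- A set is α-open if it is contained in the interior of the closure of its interior. -/
def AlphaOpen (A : Set X) : Prop := A ⊆ interior (closure (interior A))

/-- A set is preopen if it is contained in the interior of its closure. -/
def Preopen (A : Set X) : Prop := A ⊆ interior (closure A)

/-- A set is preclosed if the closure of its interior is contained in it. -/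
def Preclosed (A : Set X) : Prop := closure (interior A) ⊆ A

/-- A B-set is the intersection of an open set and a semi-closed set. -/
def BSet (A : Set X) : Prop := ∃ U F : Set X, IsOpen U ∧ SemiClosed F ∧ A = U ∩ F

/-- The semi-closure of a set: the intersection of all semi-closed sets containing it. -/
def sCl (A : Set X) : Set X := ⋂₀ {B : Set X | SemiClosed B ∧ A ⊆ B}

/-- A set is gs-closed if its semi-closure is contained in every open superset. -/
def GsClosed (A : Set X) : Prop := ∀ U : Set X, IsOpen U → A ⊆ U → sCl A ⊆ U

/-- A set is sg-closed if its semi-closure is contained in every semi-open superset. -/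
def SgClosed (A : Set X) : Prop := ∀ U : Set X, SemiOpen U → A ⊆ U → sCl A ⊆ U

/-- A set is simply-open if it is the union of an open set and a nowhere dense set. -/
def SimplyOpen (A : Set X) : Prop := ∃ U N : Set X, IsOpen U ∧ IsNowhereDense N ∧ A = U ∪ N

end Defs

section FunDefs
variable {X Y : Type*} [TopologicalSpace X] [TopologicalSpace Y]

/-- A function is contra-semicontinuous if preimages of open sets are semi-closed. -/
def ContraSemicontinuous (f : X → Y) : Prop := ∀ V : Set Y, IsOpen V → SemiClosed (f ⁻¹' V)

/-- A function is contra-continuous if preimages of open sets are closed. -/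
def ContraContinuous (f : X → Y) : Prop := ∀ V : Set Y, IsOpen V → IsClosed (f ⁻¹' V)

/-- A function is SR-continuous if preimages of open sets are semi-regular. -/
def SRContinuous (f : X → Y) : Prop := ∀ V : Set Y, IsOpen V → SemiRegular (f ⁻¹' V)

/-- A function is β-continuous if preimages of open sets are β-open. -/
def BetaContinuous (f : X → Y) : Prop := ∀ V : Set Y, IsOpen V → BetaOpen (f ⁻¹' V)

/-- A function is semi-continuous if preimages of open sets are semi-open. -/
def SemiContinuous (f : X → Y) : Prop := ∀ V : Set Y, IsOpen V → SemiOpen (f ⁻¹' V)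

/-- A function is completely continuous if preimages of open sets are regular open. -/
def CompletelyContinuous (f : X → Y) : Prop := ∀ V : Set Y, IsOpen V → RegularOpen (f ⁻¹' V)

/-- A function is precontinuous if preimages of open sets are preopen. -/
def Precontinuous (f : X → Y) : Prop := ∀ V : Set Y, IsOpen V → Preopen (f ⁻¹' V)

/-- A function is RC-continuous if preimages of open sets are regular closed. -/
def RCContinuous (f : X → Y) : Prop := ∀ V : Set Y, IsOpen V → RegularClosed (f ⁻¹' V)

/-- A function is B-continuous if preimages of open sets are B-sets. -/
def BContinuous (f : X → Y) : Prop := ∀ V : Set Y, IsOpen V → BSet (f ⁻¹' V)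

/-- A function is contra-gs-continuous if preimages of open sets are gs-closed. -/
def ContraGsContinuous (f : X → Y) : Prop := ∀ V : Set Y, IsOpen V → GsClosed (f ⁻¹' V)

/-- A function is contra-sg-continuous if preimages of open sets are sg-closed. -/
def ContraSgContinuous (f : X → Y) : Prop := ∀ V : Set Y, IsOpen V → SgClosed (f ⁻¹' V)

/-- A function is simply-continuous if preimages of open sets are simply-open. -/
def SimplyContinuous (f : X → Y) : Prop := ∀ V : Set Y, IsOpen V → SimplyOpen (f ⁻¹' V)

/-- A function is perfectly continuous if preimages of open sets are clopen. -/
def PerfectlyContinuous (f : X → Y) : Prop := ∀ V : Set Y, IsOpen V → IsClopen (f ⁻¹' V)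

/-- A function is preclosed if images of closed sets are preclosed. -/
def PreclosedMap (f : X → Y) : Prop := ∀ C : Set X, IsClosed C → Preclosed (f '' C)

end FunDefs

section SpaceDefs
variable (X : Type*) [TopologicalSpace X]

/-- A space is semi-compact if every semi-open cover has a finite subcover. -/
def SemiCompact : Prop :=
  ∀ S : Set (Set X), (∀ A ∈ S, SemiOpen A) → ⋃₀ S = univ →
    ∃ F : Finset (Set X), ↑F ⊆ S ∧ ⋃₀ (↑F : Set (Set X)) = univ

/-- A space is strongly S-closed if every closed cover has a finite subcover. -/
def StronglySClosed : Prop :=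
  ∀ S : Set (Set X), (∀ A ∈ S, IsClosed A) → ⋃₀ S = univ →
    ∃ F : Finset (Set X), ↑F ⊆ S ∧ ⋃₀ (↑F : Set (Set X)) = univ

/-- A space is mildly compact if every clopen cover has a finite subcover. -/
def MildlyCompact : Prop :=
  ∀ S : Set (Set X), (∀ A ∈ S, IsClopen A) → ⋃₀ S = univ →
    ∃ F : Finset (Set X), ↑F ⊆ S ∧ ⋃₀ (↑F : Set (Set X)) = univ

/-- A space is s-closed if every semi-open cover has a finite subfamily whose
semi-closures cover the space. -/
def IsSClosedSpace : Prop :=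
  ∀ S : Set (Set X), (∀ A ∈ S, SemiOpen A) → ⋃₀ S = univ →
    ∃ F : Finset (Set X), ↑F ⊆ S ∧ (⋃ A ∈ F, sCl A) = univ

/-- A space is S-closed if every semi-open cover has a finite subfamily whose
closures cover the space. -/
def IsCapSClosedSpace : Prop :=
  ∀ S : Set (Set X), (∀ A ∈ S, SemiOpen A) → ⋃₀ S = univ →
    ∃ F : Finset (Set X), ↑F ⊆ S ∧ (⋃ A ∈ F, closure A) = univ

/-- A space is nearly compact if every open cover has a finite subfamily such that the
interiors of the closures of its members cover the space. -/
def NearlyCompact : Prop :=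
  ∀ S : Set (Set X), (∀ A ∈ S, IsOpen A) → ⋃₀ S = univ →
    ∃ F : Finset (Set X), ↑F ⊆ S ∧ (⋃ A ∈ F, interior (closure A)) = univ

/-- A space is hyperconnected if every nonempty open set is dense. -/
def Hyperconnected : Prop := ∀ U : Set X, IsOpen U → U.Nonempty → Dense U

/-- A space satisfies the countable chain condition if every pairwise disjoint family of
nonempty open sets is countable. -/
def CCC : Prop :=
  ∀ S : Set (Set X), (∀ A ∈ S, IsOpen A ∧ A.Nonempty) → S.PairwiseDisjoint id → S.Countable

/-- A space is globally disconnected if every semi-open set is open. -/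
def GloballyDisconnected : Prop := ∀ A : Set X, SemiOpen A → IsOpen A

/-- A space is locally indiscrete if every open set is closed. -/
def LocallyIndiscrete : Prop := ∀ U : Set X, IsOpen U → IsClosed U

end SpaceDefs

section Aux
variable {X : Type*} [TopologicalSpace X]

lemma subset_sCl (A : Set X) : A ⊆ sCl A :=
  subset_sInter fun _ hB => hB.2

lemma sCl_eq_union (A : Set X) : sCl A = A ∪ interior (closure A) := by
  apply subset_antisymm
  · apply sInter_subset_of_mem
    constructor
    · intro x hx
      have h1 : closure (A ∪ interior (closure A)) ⊆ closure A := by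
        rw [closure_union]
        exact union_subset subset_rfl
          ((closure_mono interior_subset).trans (by rw [closure_closure]))
      exact Or.inr (interior_mono h1 hx)
    · exact subset_union_left
  · apply union_subset (subset_sCl A)
    apply subset_sInter
    intro B hB
    exact (interior_mono (closure_mono hB.2)).trans hB.1

/-- Generic transfer lemma: from a subcover theorem for `P`-covers to a subfamily
whose `t`-images cover, given `t` maps members of `S` to `P`-supersets. -/
lemma cover_transfer {X : Type*} [TopologicalSpace X] (P : Set X → Prop) (t : Set X → Set X)
    (h : ∀ S : Set (Set X), (∀ A ∈ S, P A) → ⋃₀ S = univ →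
      ∃ F : Finset (Set X), ↑F ⊆ S ∧ ⋃₀ (↑F : Set (Set X)) = univ)
    (S : Set (Set X)) (hP : ∀ A ∈ S, P (t A)) (hsub : ∀ A ∈ S, A ⊆ t A)
    (hcov : ⋃₀ S = univ) :
    ∃ F : Finset (Set X), ↑F ⊆ S ∧ (⋃ A ∈ F, t A) = univ := by
  obtain ⟨F', hF'sub, hF'cov⟩ := h (t '' S)
    (by rintro B ⟨A, hA, rfl⟩; exact hP A hA)
    (by
      apply eq_univ_of_univ_subset
      rw [← hcov]
      rintro x ⟨A, hA, hx⟩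
      exact ⟨t A, ⟨A, hA, rfl⟩, hsub A hA hx⟩)
  have hchoice : ∀ B ∈ F', ∃ A, A ∈ S ∧ t A = B := fun B hB => by
    obtain ⟨A, hA, rfl⟩ := hF'sub hB
    exact ⟨A, hA, rfl⟩
  choose g hg1 hg2 using hchoice
  classical
  refine ⟨F'.attach.image fun B => g B.1 B.2, ?_, ?_⟩
  · intro A hA
    simp only [Finset.coe_image, mem_image] at hA
    obtain ⟨B, _, rfl⟩ := hA
    exact hg1 _ _
  · apply eq_univ_of_univ_subset
    rw [← hF'cov]
    rintro x ⟨B, hB, hx⟩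
    simp only [mem_iUnion]
    refine ⟨g B hB, ?_, ?_⟩
    · simp only [Finset.mem_image, Finset.mem_attach]
      exact ⟨⟨B, hB⟩, trivial, rfl⟩
    · rw [hg2 B hB]; exact hx

end Aux

theorem sClosed_SClosed_nearlyCompact_cover_characterizations
    (X : Type*) [TopologicalSpace X] :
    (IsSClosedSpace X ↔
      ∀ S : Set (Set X), (∀ A ∈ S, SemiRegular A) → ⋃₀ S = univ →
        ∃ F : Finset (Set X), ↑F ⊆ S ∧ ⋃₀ (↑F : Set (Set X)) = univ) ∧
    (IsCapSClosedSpace X ↔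
      ∀ S : Set (Set X), (∀ A ∈ S, RegularClosed A) → ⋃₀ S = univ →
        ∃ F : Finset (Set X), ↑F ⊆ S ∧ ⋃₀ (↑F : Set (Set X)) = univ) ∧
    (NearlyCompact X ↔
      ∀ S : Set (Set X), (∀ A ∈ S, RegularOpen A) → ⋃₀ S = univ →
        ∃ F : Finset (Set X), ↑F ⊆ S ∧ ⋃₀ (↑F : Set (Set X)) = univ) := by
  have sCl_self : ∀ A : Set X, SemiClosed A → sCl A = A := by
    intro A hA
    exact subset_antisymm (sInter_subset_of_mem ⟨hA, subset_rfl⟩) (subset_sCl A)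
  have semiRegular_sCl : ∀ A : Set X, SemiOpen A → SemiRegular (sCl A) := by
    intro A hA
    rw [sCl_eq_union]
    constructor
    · -- semi-open
      have h1 : A ⊆ closure (interior (A ∪ interior (closure A))) :=
        hA.trans (closure_mono (interior_mono subset_union_left))
      have h2 : interior (closure A) ⊆ closure (interior (A ∪ interior (closure A))) := by
        have : closure A ⊆ closure (interior A) := by
          have := closure_mono hA
          rwa [closure_closure] at this
        calc interior (closure A) ⊆ closure A := interior_subset
          _ ⊆ closure (interior A) := this
          _ ⊆ _ := closure_mono (interior_mono subset_union_left)
      exact union_subset h1 h2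
    · -- semi-closed
      intro x hx
      have hcl : closure (A ∪ interior (closure A)) = closure A := by
        rw [closure_union]
        apply subset_antisymm
        · exact union_subset subset_rfl
            ((closure_mono interior_subset).trans (by rw [closure_closure]))
        · exact subset_union_left
      rw [hcl] at hx
      exact Or.inr hx
  have clA_eq : ∀ A : Set X, SemiOpen A → RegularClosed (closure A) := by
    intro A hA
    apply subset_antisymm
    · calc closure A ⊆ closure (closure (interior A)) := by
            rw [closure_closure]
            have := closure_mono hA
            rwa [closure_closure] at this
        _ = closure (interior A) := closure_closure
        _ ⊆ closure (interior (closure A)) := closure_mono (interior_mono subset_closure)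
    · calc closure (interior (closure A)) ⊆ closure (closure A) :=
            closure_mono interior_subset
        _ = closure A := closure_closure
  have intclA_eq : ∀ A : Set X, IsOpen A → RegularOpen (interior (closure A)) := by
    intro A hA
    have hcl : closure (interior (closure A)) = closure A := by
      apply subset_antisymm
      · have := closure_mono (interior_subset (s := closure A))
        rwa [closure_closure] at this
      · exact closure_mono (interior_maximal subset_closure hA)
    rw [RegularOpen, hcl]
  refine ⟨⟨?_, ?_⟩, ⟨?_, ?_⟩, ⟨?_, ?_⟩⟩
  · -- s-closed → semi-regular cover
    intro h S hSR hcov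
    obtain ⟨F, hFsub, hFcov⟩ := h S (fun A hA => (hSR A hA).1) hcov
    refine ⟨F, hFsub, ?_⟩
    apply eq_univ_of_univ_subset
    rw [← hFcov]
    rintro x hx
    simp only [mem_iUnion] at hx
    obtain ⟨A, hAF, hx⟩ := hx
    rw [sCl_self A (hSR A (hFsub hAF)).2] at hx
    exact ⟨A, hAF, hx⟩
  · -- semi-regular cover → s-closed
    intro h S hSO hcov
    exact cover_transfer SemiRegular sCl h S
      (fun A hA => semiRegular_sCl A (hSO A hA))
      (fun A hA => subset_sCl A) hcov
  · -- S-closed → regular closed cover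
    intro h S hRC hcov
    obtain ⟨F, hFsub, hFcov⟩ := h S
      (fun A hA => by rw [SemiOpen]; nth_rewrite 1 [hRC A hA]; exact subset_rfl) hcov
    refine ⟨F, hFsub, ?_⟩
    apply eq_univ_of_univ_subset
    rw [← hFcov]
    rintro x hx
    simp only [mem_iUnion] at hx
    obtain ⟨A, hAF, hx⟩ := hx
    have hAclosed : closure A = A := by
      conv_lhs => rw [hRC A (hFsub hAF)]
      rw [closure_closure, ← hRC A (hFsub hAF)]
    rw [hAclosed] at hx
    exact ⟨A, hAF, hx⟩
  · -- regular closed cover → S-closed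
    intro h S hSO hcov
    exact cover_transfer RegularClosed closure h S
      (fun A hA => clA_eq A (hSO A hA))
      (fun A _ => subset_closure) hcov
  · -- nearly compact → regular open cover
    intro h S hRO hcov
    obtain ⟨F, hFsub, hFcov⟩ := h S
      (fun A hA => by rw [hRO A hA]; exact isOpen_interior) hcov
    refine ⟨F, hFsub, ?_⟩
    apply eq_univ_of_univ_subset
    rw [← hFcov]
    rintro x hx
    simp only [mem_iUnion] at hx
    obtain ⟨A, hAF, hx⟩ := hx
    rw [← hRO A (hFsub hAF)] at hx
    exact ⟨A, hAF, hx⟩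
  · -- regular open cover → nearly compact
    intro h S hO hcov
    exact cover_transfer RegularOpen (fun A => interior (closure A)) h S
      (fun A hA => intclA_eq A (hO A hA))
      (fun A hA => interior_maximal subset_closure (hO A hA)) hcov
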